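/- arXiv:1810.03982 — 2 statements merged into one kernel-verified Lean document; each statement's English description precedes it below -/
import Mathlib

section
/- If X is a chi-squared random variable with n degrees of freedom, then for every x > 0, P(X - n ≥ 2√(nx) + 2x) ≤ e^{-x}. -/
open MeasureTheory ProbabilityTheory Real

/-! Chernoff's method. For a standard Gaussian `g` and `t < 1/2`, `E exp (t g²) = (1 - 2t)^{-1/2}`,
and `-½ log (1 - 2t) ≤ t + t² / (1 - 2t)`, so by independence
`P(∑ gᵢ² ≥ n + ε) ≤ exp (n t² / (1 - 2t) - t ε)`. With `ε = 2√(nx) + 2x` the choice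
`t = √x / (√n + 2√x)` makes this exponent exactly `-x`. -/

lemma integral_gaussianReal_exp_mul_sq {t : ℝ} (ht : t < 1 / 2) :
    ∫ y, exp (t * y ^ 2) ∂gaussianReal 0 1 = (√(1 - 2 * t))⁻¹ := by
  have hpdf : ∀ y, gaussianPDFReal 0 1 y • exp (t * y ^ 2)
      = (√(2 * π))⁻¹ * exp (-(1 / 2 - t) * y ^ 2) := by
    intro y
    simp only [gaussianPDFReal, smul_eq_mul, NNReal.coe_one, mul_one, sub_zero, mul_assoc,
      ← exp_add]
    congr 2
    ring
  rw [integral_gaussianReal_eq_integral_smul one_ne_zero]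
  simp_rw [hpdf]
  rw [integral_const_mul, integral_gaussian, ← sqrt_inv, ← sqrt_inv,
    ← sqrt_mul' _ (by positivity)]
  congr 1
  field_simp

lemma integrable_exp_mul_sq_gaussianReal {t : ℝ} (ht : t < 1 / 2) :
    Integrable (fun y ↦ exp (t * y ^ 2)) (gaussianReal 0 1) :=
  .of_integral_ne_zero <| by
    rw [integral_gaussianReal_exp_mul_sq ht]
    exact (inv_pos.2 (sqrt_pos.2 (by linarith))).ne'

lemma inv_sqrt_one_sub_two_mul_le_exp {t : ℝ} (h0 : 0 ≤ t) (h1 : t < 1 / 2) :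
    (√(1 - 2 * t))⁻¹ ≤ exp (t + t ^ 2 / (1 - 2 * t)) := by
  set a := t + t ^ 2 / (1 - 2 * t)
  have hu : 0 < 1 - 2 * t := by linarith
  have ha : 0 ≤ a := by positivity
  have hquad : 1 ≤ (1 + 2 * a + (2 * a) ^ 2 / 2) * (1 - 2 * t) := by
    simp only [a]
    field_simp
    nlinarith [sq_nonneg t, mul_nonneg h0 hu.le, pow_nonneg h0 3, pow_nonneg h0 4]
  have hsq : 1 ≤ (exp a * √(1 - 2 * t)) ^ 2 := by
    rw [mul_pow, sq_sqrt hu.le, ← exp_nat_mul]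
    calc 1 ≤ (1 + 2 * a + (2 * a) ^ 2 / 2) * (1 - 2 * t) := hquad
      _ ≤ exp (2 * a) * (1 - 2 * t) := by
        gcongr; exact quadratic_le_exp_of_nonneg (by positivity)
      _ = _ := by norm_num
  rw [inv_le_iff_one_le_mul₀ (sqrt_pos.2 hu)]
  exact (one_le_sq_iff₀ (by positivity)).1 hsq

section

variable {Ω : Type*} [MeasurableSpace Ω] {P : Measure Ω}

lemma integrable_exp_mul_sq_of_map_eq_gaussianReal {X : Ω → ℝ} (hX : Measurable X)
    (hmap : P.map X = gaussianReal 0 1) {t : ℝ} (ht : t < 1 / 2) :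
    Integrable (fun ω ↦ exp (t * X ω ^ 2)) P :=
  (integrable_map_measure (g := fun y ↦ exp (t * y ^ 2)) (by fun_prop) hX.aemeasurable).1
    (hmap ▸ integrable_exp_mul_sq_gaussianReal ht)

lemma mgf_sq_of_map_eq_gaussianReal {X : Ω → ℝ} (hX : Measurable X)
    (hmap : P.map X = gaussianReal 0 1) {t : ℝ} (ht : t < 1 / 2) :
    mgf (fun ω ↦ X ω ^ 2) P t = (√(1 - 2 * t))⁻¹ := by
  rw [← integral_gaussianReal_exp_mul_sq ht, ← hmap,
    integral_map hX.aemeasurable (by fun_prop)]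
  rfl

lemma measureReal_sum_sq_ge_le {ι : Type*} [Fintype ι] [IsProbabilityMeasure P]
    {g : ι → Ω → ℝ} (hmeas : ∀ i, Measurable (g i)) (hindep : iIndepFun g P)
    (hgauss : ∀ i, P.map (g i) = gaussianReal 0 1) {t : ℝ} (ht0 : 0 ≤ t) (ht : t < 1 / 2)
    (ε : ℝ) :
    P.real {ω | ε ≤ ∑ i, g i ω ^ 2}
      ≤ exp (-t * ε) * (√(1 - 2 * t))⁻¹ ^ Fintype.card ι := by
  have hindep_sq : iIndepFun (fun i ω ↦ g i ω ^ 2) P :=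
    hindep.comp (fun _ y ↦ y ^ 2) (fun _ ↦ by fun_prop)
  have hmeas_sq : ∀ i, Measurable (fun ω ↦ g i ω ^ 2) := fun i ↦ by fun_prop
  have hint := hindep_sq.integrable_exp_mul_sum hmeas_sq (s := Finset.univ)
    (fun i _ ↦ integrable_exp_mul_sq_of_map_eq_gaussianReal (hmeas i) (hgauss i) ht)
  have := measure_ge_le_exp_mul_mgf ε ht0 hint
  rw [hindep_sq.mgf_sum hmeas_sq] at this
  simpa [mgf_sq_of_map_eq_gaussianReal (hmeas _) (hgauss _) ht] using this

end

lemma laurent_massart_exponent_eq {n x t : ℝ} (hn : 0 < n) (hx : 0 < x)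
    (ht : t = √x / (√n + 2 * √x)) :
    -t * (n + (2 * √(n * x) + 2 * x)) + n * (t + t ^ 2 / (1 - 2 * t)) = -x := by
  have hs := sq_sqrt hn.le
  have hr := sq_sqrt hx.le
  rw [sqrt_mul hn.le]
  set s := √n
  set r := √x
  have : 0 < s := sqrt_pos.2 hn
  have : 0 < r := sqrt_pos.2 hx
  have h1 : 1 - 2 * t = s / (s + 2 * r) := by
    rw [ht]; field_simp; ring
  rw [h1, ht, ← hs, ← hr]
  field_simp
  ring

/-- Laurent–Massart upper tail bound for chi-squared: if `X = ∑ i, g i ^ 2` with `g i`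
i.i.d. standard Gaussians, then for all `x > 0`, `P(X - n ≥ 2√(nx) + 2x) ≤ e^{-x}`. -/
theorem chi_squared_upper_tail {Ω : Type*} [MeasurableSpace Ω] (P : Measure Ω)
    [IsProbabilityMeasure P] (n : ℕ) (g : Fin n → Ω → ℝ)
    (hmeas : ∀ i, Measurable (g i))
    (hindep : iIndepFun g P)
    (hgauss : ∀ i, P.map (g i) = gaussianReal 0 1)
    (x : ℝ) (hx : 0 < x) :
    P {ω | 2 * Real.sqrt (n * x) + 2 * x ≤ (∑ i, (g i ω) ^ 2) - n}
      ≤ ENNReal.ofReal (Real.exp (-x)) := by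
  simp_rw [le_sub_iff_add_le']
  rcases n.eq_zero_or_pos with rfl | hn
  · have : ¬ 2 * x ≤ 0 := by linarith
    simp [this]
  set t := √x / (√n + 2 * √x) with ht
  have ht0 : 0 < t := by positivity
  have ht1 : t < 1 / 2 := by
    rw [ht, div_lt_iff₀ (by positivity)]
    linarith [sqrt_pos.2 (Nat.cast_pos.2 hn)]
  rw [ENNReal.le_ofReal_iff_toReal_le (measure_ne_top _ _) (exp_pos _).le]
  calc P.real _ ≤ exp (-t * _) * (√(1 - 2 * t))⁻¹ ^ n := by
        simpa only [Fintype.card_fin] using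
          measureReal_sum_sq_ge_le hmeas hindep hgauss ht0.le ht1 _
    _ ≤ exp (-t * _) * exp (t + t ^ 2 / (1 - 2 * t)) ^ n := by
        gcongr; exact inv_sqrt_one_sub_two_mul_le_exp ht0.le ht1
    _ = exp (-x) := by
        rw [← exp_nat_mul, ← exp_add, laurent_massart_exponent_eq (by positivity) hx ht]
end

section
/- Let η ~ N(0, I_n) and let S₁, ..., S_M be linear subspaces of ℝ^n, each of dimension at most ℓ, with M ≤ n₀^{ℓ} for some n₀ ≥ 2. If ℓ log(n₀)/n ≤ 1/32 then, with probability at least 1 − 2n₀^{-ℓ}, for every i and every x ∈ S_i, ‖x − η‖² ≥ ‖η‖²(1 − 20ℓ log(n₀)/n). -/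
open MeasureTheory ProbabilityTheory Real Module
open scoped ENNReal

/-!
For `x ∈ K` we have `‖x - η‖² ≥ ‖η‖² - ‖P_K η‖²`, and `P_K η` is a standard Gaussian vector
in `K`, so `‖P_K η‖²` is a chi-square variable with at most `ℓ` degrees of freedom. The Gaussian
moment generating function `E exp(u X²) = (1 - 2u)^{-1/2}` and Markov's inequality give
`‖P_K η‖² < 10 ℓ log n₀` outside an event of probability `n₀^{-2ℓ}`, and `‖η‖² > n / 2`
outside an event of probability `e^{-n/16} ≤ n₀^{-ℓ}`. A union bound over the
`M ≤ n₀^ℓ` subspaces leaves probability at least `1 - 2 n₀^{-ℓ}`, and on the good event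
`‖P_K η‖² < 10 ℓ log n₀ ≤ (20 ℓ log n₀ / n) ‖η‖²`.
-/

lemma ofReal_one_sub_le_measure {Ω : Type*} [MeasurableSpace Ω] {P : Measure Ω}
    [IsProbabilityMeasure P] {s t : Set Ω} {p : ℝ} (hp : 0 ≤ p) (hs : P s ≤ ENNReal.ofReal p)
    (hst : sᶜ ⊆ t) : ENNReal.ofReal (1 - p) ≤ P t := by
  have hcover : 1 ≤ P s + P sᶜ := by
    simpa [Set.union_compl_self] using measure_union_le (μ := P) s sᶜ
  calc ENNReal.ofReal (1 - p) = 1 - ENNReal.ofReal p := by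
        rw [ENNReal.ofReal_sub _ hp, ENNReal.ofReal_one]
    _ ≤ 1 - P s := tsub_le_tsub_left hs 1
    _ ≤ P sᶜ := tsub_le_iff_left.2 hcover
    _ ≤ P t := measure_mono hst

lemma measure_ge_le_ofReal_exp_neg_mul_lintegral {α : Type*} [MeasurableSpace α]
    (μ : Measure α) {f : α → ℝ} (hf : Measurable f) (a : ℝ) :
    μ {x | a ≤ f x} ≤ ENNReal.ofReal (exp (-a)) * ∫⁻ x, ENNReal.ofReal (exp (f x)) ∂μ := by
  calc μ {x | a ≤ f x}
      ≤ μ {x | ENNReal.ofReal (exp a) ≤ ENNReal.ofReal (exp (f x))} :=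
        measure_mono fun x hx => ENNReal.ofReal_le_ofReal (exp_le_exp.2 hx)
    _ ≤ (∫⁻ x, ENNReal.ofReal (exp (f x)) ∂μ) / ENNReal.ofReal (exp a) :=
        meas_ge_le_lintegral_div (by fun_prop) (by simp [exp_pos]) ENNReal.ofReal_ne_top
    _ = _ := by
        rw [div_eq_mul_inv, mul_comm, ← ENNReal.ofReal_inv_of_pos (exp_pos a), ← exp_neg]

lemma lintegral_exp_mul_sq_gaussianReal {u : ℝ} (hu : u < 1 / 2) :
    ∫⁻ x, ENNReal.ofReal (exp (u * x ^ 2)) ∂gaussianReal 0 1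
      = ENNReal.ofReal (√(1 - 2 * u))⁻¹ := by
  have hpos : 0 < 1 / 2 - u := by linarith
  have hdens : ∀ x : ℝ, gaussianPDF 0 1 x * ENNReal.ofReal (exp (u * x ^ 2))
      = ENNReal.ofReal ((√(2 * π))⁻¹ * exp (-(1 / 2 - u) * x ^ 2)) := by
    intro x
    rw [gaussianPDF, ← ENNReal.ofReal_mul (gaussianPDFReal_nonneg 0 1 x), gaussianPDFReal,
      mul_assoc, ← exp_add]
    simp only [NNReal.coe_one, mul_one, sub_zero]
    ring_nf
  rw [gaussianReal_of_var_ne_zero 0 one_ne_zero,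
    lintegral_withDensity_eq_lintegral_mul _ (measurable_gaussianPDF 0 1) (by fun_prop)]
  simp_rw [Pi.mul_apply, hdens]
  rw [← ofReal_integral_eq_lintegral_ofReal ((integrable_exp_neg_mul_sq hpos).const_mul _)
      (ae_of_all _ fun x => by positivity), integral_const_mul, integral_gaussian,
    ← sqrt_inv, ← sqrt_inv, ← sqrt_mul (by positivity)]
  congr 2
  field_simp

lemma map_eq_stdGaussian_of_iIndepFun {Ω ι : Type*} [MeasurableSpace Ω] [Fintype ι]
    (P : Measure Ω) [IsProbabilityMeasure P] (η : Ω → EuclideanSpace ℝ ι)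
    (hmeas : ∀ i, Measurable fun ω => η ω i) (hindep : iIndepFun (fun i ω => η ω i) P)
    (hgauss : ∀ i, P.map (fun ω => η ω i) = gaussianReal 0 1) :
    P.map η = stdGaussian (EuclideanSpace ℝ ι) := by
  have hcoord : P.map (fun ω i => η ω i) = Measure.pi fun _ : ι => gaussianReal 0 1 := by
    rw [(iIndepFun_iff_map_fun_eq_pi_map fun i => (hmeas i).aemeasurable).1 hindep]
    simp_rw [hgauss]
  rw [← map_pi_eq_stdGaussian, ← hcoord,
    Measure.map_map (WithLp.measurable_toLp 2 _) (measurable_pi_lambda _ hmeas)]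
  rfl

section InnerProductSpace

variable {E : Type*} [NormedAddCommGroup E] [InnerProductSpace ℝ E]

lemma Submodule.norm_sq_sub_norm_sq_orthogonalProjectionOnto_le (K : Submodule ℝ E)
    [K.HasOrthogonalProjection] {x : E} (hx : x ∈ K) (y : E) :
    ‖y‖ ^ 2 - ‖K.orthogonalProjectionOnto y‖ ^ 2 ≤ ‖x - y‖ ^ 2 := by
  have hmin : ‖y - K.starProjection y‖ ≤ ‖y - x‖ := by
    rw [K.starProjection_minimal]
    exact ciInf_le ⟨0, Set.forall_mem_range.2 fun _ => norm_nonneg _⟩ (⟨x, hx⟩ : K)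
  have hpyth := K.norm_sq_eq_add_norm_sq_starProjection y
  rw [K.starProjection_orthogonal_val] at hpyth
  change ‖y‖ ^ 2 - ‖K.starProjection y‖ ^ 2 ≤ ‖x - y‖ ^ 2
  rw [norm_sub_rev x]
  nlinarith [norm_nonneg (y - K.starProjection y)]

variable [FiniteDimensional ℝ E] [MeasurableSpace E] [BorelSpace E]

lemma stdGaussian_map_orthogonalProjectionOnto (K : Submodule ℝ E) :
    (stdGaussian E).map K.orthogonalProjectionOnto = stdGaussian K := by
  apply Measure.ext_of_charFunDual
  ext L
  have hnorm : ‖L.comp K.orthogonalProjectionOnto‖ = ‖L‖ := by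
    refine le_antisymm ?_ ?_
    · calc ‖L.comp K.orthogonalProjectionOnto‖ ≤ ‖L‖ * ‖K.orthogonalProjectionOnto‖ :=
            L.opNorm_comp_le _
        _ ≤ ‖L‖ := mul_le_of_le_one_right (norm_nonneg _) K.orthogonalProjectionOnto_norm_le
    · calc ‖L‖ = ‖(L.comp K.orthogonalProjectionOnto).comp K.subtypeL‖ := by
            congr 1; ext x; simp
        _ ≤ ‖L.comp K.orthogonalProjectionOnto‖ * ‖K.subtypeL‖ :=
            ContinuousLinearMap.opNorm_comp_le _ _
        _ ≤ ‖L.comp K.orthogonalProjectionOnto‖ :=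
            mul_le_of_le_one_right (norm_nonneg _) K.norm_subtypeL_le
  rw [charFunDual_map, charFunDual_stdGaussian, charFunDual_stdGaussian, hnorm]

lemma lintegral_exp_mul_norm_sq_stdGaussian {u : ℝ} (hu : u < 1 / 2) :
    ∫⁻ y, ENNReal.ofReal (exp (u * ‖y‖ ^ 2)) ∂stdGaussian E
      = ENNReal.ofReal (√(1 - 2 * u))⁻¹ ^ finrank ℝ E := by
  let b := stdOrthonormalBasis ℝ E
  let f : ℝ → ℝ≥0∞ := fun t => ENNReal.ofReal (exp (u * t ^ 2))
  have hf : Measurable f := by fun_prop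
  have hprod : ∀ x : Fin (finrank ℝ E) → ℝ,
      ENNReal.ofReal (exp (u * ‖b.repr.symm (WithLp.toLp 2 x)‖ ^ 2)) = ∏ i, f (x i) := by
    intro x
    rw [LinearIsometryEquiv.norm_map, EuclideanSpace.real_norm_sq_eq, Finset.mul_sum, exp_sum,
      ENNReal.ofReal_prod_of_nonneg fun i _ => (exp_pos _).le]
  rw [← stdGaussian_map b.repr.symm, ← map_pi_eq_stdGaussian,
    Measure.map_map (by fun_prop) (by fun_prop), lintegral_map (by fun_prop) (by fun_prop)]
  simp only [Function.comp_apply, hprod]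
  rw [lintegral_prod_eq_prod_lintegral_of_indepFun _ _
      (iIndepFun_pi (X := fun _ => f) fun _ => hf.aemeasurable)
      fun i => hf.comp (measurable_pi_apply i),
    Finset.prod_congr rfl fun i _ => (measurePreserving_eval _ i).lintegral_comp hf]
  simp [f, lintegral_exp_mul_sq_gaussianReal hu]

lemma stdGaussian_norm_sq_ge_le (a : ℝ) :
    stdGaussian E {y | a ≤ ‖y‖ ^ 2} ≤ ENNReal.ofReal (exp (-(3 / 8 * a)) * 2 ^ finrank ℝ E) := by
  have hmarkov := measure_ge_le_ofReal_exp_neg_mul_lintegral (stdGaussian E)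
    (f := fun y => 3 / 8 * ‖y‖ ^ 2) (by fun_prop) (3 / 8 * a)
  have htwo : (√(1 - 2 * (3 / 8 : ℝ)))⁻¹ = 2 := by
    rw [show (1 - 2 * (3 / 8) : ℝ) = 2⁻¹ ^ 2 by norm_num, sqrt_sq (by norm_num), inv_inv]
  rw [lintegral_exp_mul_norm_sq_stdGaussian (by norm_num), htwo] at hmarkov
  calc stdGaussian E {y | a ≤ ‖y‖ ^ 2} ≤ stdGaussian E {y | 3 / 8 * a ≤ 3 / 8 * ‖y‖ ^ 2} :=
        measure_mono fun y (hy : a ≤ ‖y‖ ^ 2) => show 3 / 8 * a ≤ 3 / 8 * ‖y‖ ^ 2 by linarith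
    _ ≤ _ := hmarkov
    _ = _ := by rw [← ENNReal.ofReal_pow zero_le_two, ← ENNReal.ofReal_mul (exp_pos _).le]

lemma stdGaussian_norm_sq_le_half_finrank_le :
    stdGaussian E {y | ‖y‖ ^ 2 ≤ finrank ℝ E / 2}
      ≤ ENNReal.ofReal (exp (-(finrank ℝ E / 16))) := by
  set d := finrank ℝ E
  have hmarkov := measure_ge_le_ofReal_exp_neg_mul_lintegral (stdGaussian E)
    (f := fun y => -(1 / 2) * ‖y‖ ^ 2) (by fun_prop) (-(d / 4))
  rw [lintegral_exp_mul_norm_sq_stdGaussian (by norm_num), neg_neg,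
    ← ENNReal.ofReal_pow (by positivity), ← ENNReal.ofReal_mul (exp_pos _).le] at hmarkov
  have hbase : exp (1 / 4) * (√(1 - 2 * -(1 / 2)))⁻¹ ≤ exp (-(1 / 16)) := by
    have hsq : exp (5 / 16) ^ 2 ≤ 2 := by
      rw [← exp_nat_mul, ← le_log_iff_exp_le two_pos]
      linarith [log_two_gt_d9]
    rw [show (1 - 2 * -(1 / 2) : ℝ) = 2 by norm_num, mul_inv_le_iff₀ (by positivity),
      show (1 / 4 : ℝ) = -(1 / 16) + 5 / 16 by norm_num, exp_add]
    exact mul_le_mul_of_nonneg_left (le_sqrt_of_sq_le hsq) (exp_pos _).le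
  calc stdGaussian E {y | ‖y‖ ^ 2 ≤ d / 2}
      ≤ stdGaussian E {y | -(d / 4) ≤ -(1 / 2) * ‖y‖ ^ 2} :=
        measure_mono fun y (hy : ‖y‖ ^ 2 ≤ d / 2) =>
          show -(d / 4) ≤ -(1 / 2) * ‖y‖ ^ 2 by linarith
    _ ≤ _ := hmarkov
    _ ≤ _ := by
        refine ENNReal.ofReal_le_ofReal ?_
        rw [show (d : ℝ) / 4 = d * (1 / 4) by ring, show -((d : ℝ) / 16) = d * -(1 / 16) by ring,
          exp_nat_mul, exp_nat_mul, ← mul_pow]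
        exact pow_le_pow_left₀ (by positivity) hbase d

end InnerProductSpace

section RandomVector

variable {Ω E : Type*} [MeasurableSpace Ω] {P : Measure Ω} [NormedAddCommGroup E]
  [InnerProductSpace ℝ E] [FiniteDimensional ℝ E] [MeasurableSpace E] [BorelSpace E] {η : Ω → E}

lemma measure_norm_sq_le_half_finrank_le (hη : AEMeasurable η P)
    (hlaw : P.map η = stdGaussian E) :
    P {ω | ‖η ω‖ ^ 2 ≤ finrank ℝ E / 2} ≤ ENNReal.ofReal (exp (-(finrank ℝ E / 16))) :=
  (Measure.le_map_apply hη {y | ‖y‖ ^ 2 ≤ finrank ℝ E / 2}).trans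
    (hlaw ▸ stdGaussian_norm_sq_le_half_finrank_le)

lemma measure_norm_sq_orthogonalProjectionOnto_ge_le (hη : AEMeasurable η P)
    (hlaw : P.map η = stdGaussian E) (K : Submodule ℝ E) (a : ℝ) :
    P {ω | a ≤ ‖K.orthogonalProjectionOnto (η ω)‖ ^ 2}
      ≤ ENNReal.ofReal (exp (-(3 / 8 * a)) * 2 ^ finrank ℝ K) :=
  calc P (η ⁻¹' (K.orthogonalProjectionOnto ⁻¹' {z | a ≤ ‖z‖ ^ 2}))
      ≤ (P.map η).map K.orthogonalProjectionOnto {z | a ≤ ‖z‖ ^ 2} :=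
        (Measure.le_map_apply hη _).trans (Measure.le_map_apply (by fun_prop) _)
    _ = stdGaussian K {z | a ≤ ‖z‖ ^ 2} := by
        rw [hlaw, stdGaussian_map_orthogonalProjectionOnto]
    _ ≤ _ := stdGaussian_norm_sq_ge_le a

lemma measure_iUnion_norm_sq_orthogonalProjectionOnto_ge_le {ι : Type*} [Fintype ι]
    (hη : AEMeasurable η P) (hlaw : P.map η = stdGaussian E) (S : ι → Submodule ℝ E) {ℓ : ℕ}
    (hdim : ∀ i, finrank ℝ (S i) ≤ ℓ) {L : ℝ} (hL : 0 ≤ L) (hcard : (Fintype.card ι : ℝ) ≤ exp L)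
    (htwo : (2 : ℝ) ^ ℓ ≤ exp L) :
    P (⋃ i, {ω | 10 * L ≤ ‖(S i).orthogonalProjectionOnto (η ω)‖ ^ 2})
      ≤ ENNReal.ofReal (exp (-L)) :=
  calc _ ≤ ∑ _i : ι, ENNReal.ofReal (exp (-(3 / 8 * (10 * L))) * 2 ^ ℓ) :=
        (measure_iUnion_fintype_le _ _).trans <| Finset.sum_le_sum fun i _ =>
          (measure_norm_sq_orthogonalProjectionOnto_ge_le hη hlaw (S i) _).trans
            (ENNReal.ofReal_le_ofReal (by gcongr; exacts [one_le_two, hdim i]))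
    _ = ENNReal.ofReal (Fintype.card ι * (exp (-(3 / 8 * (10 * L))) * 2 ^ ℓ)) := by
        rw [Finset.sum_const, Finset.card_univ, nsmul_eq_mul,
          ENNReal.ofReal_mul (Nat.cast_nonneg _), ENNReal.ofReal_natCast]
    _ ≤ ENNReal.ofReal (exp L * (exp (-(3 / 8 * (10 * L))) * exp L)) := by gcongr
    _ ≤ ENNReal.ofReal (exp (-L)) := by
        rw [← exp_add, ← exp_add]
        exact ENNReal.ofReal_le_ofReal (exp_le_exp.2 (by linarith))

end RandomVector

/-- Union bound over subspaces: let `η ~ N(0, I_n)` and `S₁, ..., S_M` be subspaces of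
`ℝ^n` of dimension at most `ℓ` with `M ≤ n₀^ℓ`, `n₀ ≥ 2`. If `ℓ log(n₀)/n ≤ 1/32`, then
with probability at least `1 - 2 n₀^{-ℓ}`, every point of every `S_i` is at squared
distance at least `‖η‖²(1 - 20 ℓ log(n₀)/n)` from `η`. -/
theorem gaussian_far_from_subspaces {Ω : Type*} [MeasurableSpace Ω] (P : Measure Ω)
    [IsProbabilityMeasure P] (n ℓ M n₀ : ℕ) (hn₀ : 2 ≤ n₀) (hM : M ≤ n₀ ^ ℓ)
    (S : Fin M → Submodule ℝ (EuclideanSpace ℝ (Fin n)))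
    (hdim : ∀ i, Module.finrank ℝ (S i) ≤ ℓ)
    (η : Ω → EuclideanSpace ℝ (Fin n))
    (hmeas : ∀ i, Measurable (fun ω => η ω i))
    (hindep : iIndepFun (fun i ω => η ω i) P)
    (hgauss : ∀ i, P.map (fun ω => η ω i) = gaussianReal 0 1)
    (hℓ : (ℓ : ℝ) * Real.log n₀ / n ≤ 1 / 32) :
    ENNReal.ofReal (1 - 2 / (n₀ : ℝ) ^ ℓ)
      ≤ P {ω | ∀ i, ∀ x ∈ S i,
            ‖η ω‖ ^ 2 * (1 - 20 * (ℓ : ℝ) * Real.log n₀ / n) ≤ ‖x - η ω‖ ^ 2} := by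
  obtain rfl | hn := Nat.eq_zero_or_pos n
  · exact ofReal_one_sub_le_measure (s := ∅) (by positivity) (by simp)
      fun ω _ i x _ => by simp [Subsingleton.elim (η ω) 0]
  have hη : Measurable η := (WithLp.measurable_toLp 2 _).comp (measurable_pi_lambda _ hmeas)
  have hlaw := map_eq_stdGaussian_of_iIndepFun P η hmeas hindep hgauss
  set L := (ℓ : ℝ) * log n₀ with hL
  have hL0 : 0 ≤ L := mul_nonneg ℓ.cast_nonneg (log_nonneg (by norm_cast; omega))
  have hexpL : exp L = (n₀ : ℝ) ^ ℓ := by rw [hL, exp_nat_mul, exp_log (by norm_cast; omega)]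
  have hLn : 32 * L ≤ n := by
    rw [div_le_iff₀ (by exact_mod_cast hn)] at hℓ
    linarith
  have hsmall := measure_norm_sq_le_half_finrank_le hη.aemeasurable hlaw
  rw [finrank_euclideanSpace_fin] at hsmall
  have hfar := measure_iUnion_norm_sq_orthogonalProjectionOnto_ge_le hη.aemeasurable hlaw S hdim
    hL0 (by simpa [hexpL] using (Nat.cast_le (α := ℝ)).2 hM)
    (by rw [hexpL]; gcongr; exact_mod_cast hn₀)
  have hbad : P ({ω | ‖η ω‖ ^ 2 ≤ n / 2}
      ∪ ⋃ i, {ω | 10 * L ≤ ‖(S i).orthogonalProjectionOnto (η ω)‖ ^ 2})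
      ≤ ENNReal.ofReal (exp (-L) + exp (-L)) := by
    rw [ENNReal.ofReal_add (exp_pos _).le (exp_pos _).le]
    exact (measure_union_le _ _).trans
      (add_le_add (hsmall.trans (ENNReal.ofReal_le_ofReal (exp_le_exp.2 (by linarith)))) hfar)
  rw [← hexpL, div_eq_mul_inv, ← exp_neg, two_mul]
  refine ofReal_one_sub_le_measure (by positivity) hbad fun ω hω i x hx => ?_
  simp only [Set.compl_union, Set.compl_iUnion, Set.mem_inter_iff,
    Set.mem_iInter, Set.mem_compl_iff, Set.mem_ofPred_eq, not_le] at hω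
  have hc : 20 * (ℓ : ℝ) * log n₀ / n * (n / 2) = 10 * L := by field_simp; ring
  have hc0 : 0 ≤ 20 * (ℓ : ℝ) * log n₀ / n := by rw [mul_assoc, ← hL]; positivity
  nlinarith [(S i).norm_sq_sub_norm_sq_orthogonalProjectionOnto_le hx (η ω),
    mul_le_mul_of_nonneg_left hω.1.le hc0, hω.2 i]
end
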